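/- arXiv:1212.0115 — 2 statements merged into one kernel-verified Lean document; each statement's English description precedes it below -/
import Mathlib

section
/- Let G₁ = {(x,y) ∈ ℝ² : |x| + |y| < 1} (the open unit square in the ℓ¹ norm) and G₂ = {(x,y) ∈ ℝ² : x² + y² < 1} (the open unit disc), so that G₁ ⊂ G₂. Then for all z₁, z₂ ∈ G₁, k_{G₁}(z₁, z₂) ≥ √2 · k_{G₂}(z₁, z₂). -/
open Set Metric

/-- The Euclidean distance from a point to the boundary of `G`. -/
noncomputable def bdist {n : ℕ} (G : Set (EuclideanSpace ℝ (Fin n)))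
    (x : EuclideanSpace ℝ (Fin n)) : ℝ :=
  Metric.infDist x (frontier G)

/-- The quasihyperbolic length of a path `γ` (parametrized on `[0,1]`) in `G`. -/
noncomputable def qhLength {n : ℕ} (G : Set (EuclideanSpace ℝ (Fin n)))
    (γ : ℝ → EuclideanSpace ℝ (Fin n)) : ℝ :=
  ∫ t in (0:ℝ)..1, ‖deriv γ t‖ / bdist G (γ t)

/-- The quasihyperbolic metric of `G`: the infimum of quasihyperbolic lengths of
paths joining `x` and `y` inside `G`. -/
noncomputable def qhDist {n : ℕ} (G : Set (EuclideanSpace ℝ (Fin n)))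
    (x y : EuclideanSpace ℝ (Fin n)) : ℝ :=
  ⨅ γ : {γ : ℝ → EuclideanSpace ℝ (Fin n) // γ 0 = x ∧ γ 1 = y ∧
      (∀ t ∈ Set.Icc (0:ℝ) 1, γ t ∈ G) ∧ ContDiffOn ℝ 1 γ (Set.Icc 0 1)},
    qhLength G γ.1

/-- The distance ratio metric of `G`. -/
noncomputable def jDist {n : ℕ} (G : Set (EuclideanSpace ℝ (Fin n)))
    (x y : EuclideanSpace ℝ (Fin n)) : ℝ :=
  Real.log (1 + dist x y / min (bdist G x) (bdist G y))

/-!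
At a point `z` of the ℓ¹ unit ball `G₁`, moving diagonally away from both axes reaches `∂G₁`
after Euclidean distance `(1 - ‖z‖₁) / √2`, while the unit disc `G₂` has
`δ_{G₂}(z) = 1 - ‖z‖₂ ≥ 1 - ‖z‖₁`. Hence `√2 δ_{G₁} ≤ δ_{G₂}` on `G₁`, so the quasihyperbolic
length in `G₁` of any path in `G₁` is at least `√2` times its length in `G₂`.
-/

section Quasihyperbolic

variable {n : ℕ} {G H : Set (EuclideanSpace ℝ (Fin n))} {x y : EuclideanSpace ℝ (Fin n)}

theorem continuous_bdist : Continuous (bdist G) :=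
  continuous_infDist_pt _

theorem bdist_eq_infDist_compl (hG : IsOpen G) (hG_ne : G ≠ univ) (hx : x ∈ G) :
    bdist G x = infDist x Gᶜ := by
  obtain ⟨y, hy, hxy⟩ := exists_mem_frontier_infDist_compl_eq_dist hx hG_ne
  have hfr : frontier G ⊆ Gᶜ := by
    rw [hG.frontier_eq]
    exact fun _ hz => hz.2
  exact le_antisymm (hxy ▸ infDist_le_dist_of_mem hy) (infDist_le_infDist_of_subset hfr ⟨y, hy⟩)

theorem bdist_pos (hG : IsOpen G) (hG_ne : G ≠ univ) (hx : x ∈ G) : 0 < bdist G x := by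
  rw [bdist_eq_infDist_compl hG hG_ne hx]
  exact (hG.isClosed_compl.notMem_iff_infDist_pos (nonempty_compl.2 hG_ne)).1 (not_not.2 hx)

theorem bdist_le_dist_of_notMem (hG : IsOpen G) (hx : x ∈ G) (hy : y ∉ G) :
    bdist G x ≤ dist x y := by
  rw [bdist_eq_infDist_compl hG (ne_univ_iff_exists_notMem _ |>.2 ⟨y, hy⟩) hx]
  exact infDist_le_dist_of_mem hy

theorem sub_dist_le_bdist_ball [Nontrivial (EuclideanSpace ℝ (Fin n))]
    {c : EuclideanSpace ℝ (Fin n)} {r : ℝ} (hx : x ∈ ball c r) :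
    r - dist x c ≤ bdist (ball c r) x := by
  have hr : 0 < r := pos_of_mem_ball hx
  rw [bdist, frontier_ball c hr.ne', le_infDist (NormedSpace.sphere_nonempty.2 hr.le)]
  intro y hy
  rw [mem_sphere] at hy
  linarith [dist_triangle y x c, dist_comm x y]

theorem qhLength_nonneg (G : Set (EuclideanSpace ℝ (Fin n))) (γ : ℝ → EuclideanSpace ℝ (Fin n)) :
    0 ≤ qhLength G γ :=
  intervalIntegral.integral_nonneg zero_le_one fun _ _ => div_nonneg (norm_nonneg _) infDist_nonneg

theorem qhDist_le_qhLength {γ : ℝ → EuclideanSpace ℝ (Fin n)} (hγ₀ : γ 0 = x) (hγ₁ : γ 1 = y)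
    (hγG : ∀ t ∈ Icc (0 : ℝ) 1, γ t ∈ G) (hγ : ContDiffOn ℝ 1 γ (Icc 0 1)) :
    qhDist G x y ≤ qhLength G γ := by
  refine ciInf_le ?_ (⟨γ, hγ₀, hγ₁, hγG, hγ⟩ : {γ : ℝ → EuclideanSpace ℝ (Fin n) // γ 0 = x ∧
    γ 1 = y ∧ (∀ t ∈ Icc (0 : ℝ) 1, γ t ∈ G) ∧ ContDiffOn ℝ 1 γ (Icc 0 1)})
  exact ⟨0, by rintro _ ⟨γ', rfl⟩; exact qhLength_nonneg _ _⟩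

theorem qhLength_eq_integral_derivWithin (G : Set (EuclideanSpace ℝ (Fin n)))
    (γ : ℝ → EuclideanSpace ℝ (Fin n)) :
    qhLength G γ = ∫ t in (0 : ℝ)..1, ‖derivWithin γ (Icc 0 1) t‖ / bdist G (γ t) :=
  intervalIntegral.integral_congr_Ioo_of_le zero_le_one fun t ht => by
    rw [derivWithin_of_mem_nhds (Icc_mem_nhds ht.1 ht.2)]

theorem intervalIntegrable_norm_derivWithin_div_bdist {γ : ℝ → EuclideanSpace ℝ (Fin n)}
    (hγ : ContDiffOn ℝ 1 γ (Icc 0 1)) (hpos : ∀ t ∈ Icc (0 : ℝ) 1, 0 < bdist G (γ t)) :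
    IntervalIntegrable (fun t => ‖derivWithin γ (Icc 0 1) t‖ / bdist G (γ t))
      MeasureTheory.volume 0 1 := by
  refine ContinuousOn.intervalIntegrable_of_Icc zero_le_one ?_
  exact (hγ.continuousOn_derivWithin (uniqueDiffOn_Icc one_pos) le_rfl).norm.div
    (continuous_bdist.comp_continuousOn hγ.continuousOn) fun t ht => (hpos t ht).ne'

theorem mul_qhLength_le_of_mul_bdist_le {γ : ℝ → EuclideanSpace ℝ (Fin n)} {c : ℝ} (hc : 0 < c)
    (hγ : ContDiffOn ℝ 1 γ (Icc 0 1)) (hpos : ∀ t ∈ Icc (0 : ℝ) 1, 0 < bdist G (γ t))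
    (hle : ∀ t ∈ Icc (0 : ℝ) 1, c * bdist G (γ t) ≤ bdist H (γ t)) :
    c * qhLength H γ ≤ qhLength G γ := by
  have hposH : ∀ t ∈ Icc (0 : ℝ) 1, 0 < bdist H (γ t) :=
    fun t ht => (mul_pos hc (hpos t ht)).trans_le (hle t ht)
  rw [qhLength_eq_integral_derivWithin, qhLength_eq_integral_derivWithin,
    ← intervalIntegral.integral_const_mul]
  refine intervalIntegral.integral_mono_on zero_le_one
    ((intervalIntegrable_norm_derivWithin_div_bdist hγ hposH).const_mul c)
    (intervalIntegrable_norm_derivWithin_div_bdist hγ hpos) fun t ht => ?_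
  have : c / bdist H (γ t) ≤ 1 / bdist G (γ t) := by
    rw [div_le_div_iff₀ (hposH t ht) (hpos t ht)]
    linarith [hle t ht]
  rw [mul_div_left_comm]
  exact (mul_le_mul_of_nonneg_left this (norm_nonneg (derivWithin γ (Icc 0 1) t))).trans_eq
    (mul_one_div _ _)

theorem mul_qhDist_le_of_mul_bdist_le {c : ℝ} (hc : 0 < c) (hG : IsOpen G) (hG_ne : G ≠ univ)
    (hG_conv : Convex ℝ G) (hGH : G ⊆ H) (hle : ∀ z ∈ G, c * bdist G z ≤ bdist H z)
    (hx : x ∈ G) (hy : y ∈ G) :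
    c * qhDist H x y ≤ qhDist G x y := by
  have : Nonempty {γ : ℝ → EuclideanSpace ℝ (Fin n) // γ 0 = x ∧ γ 1 = y ∧
      (∀ t ∈ Icc (0 : ℝ) 1, γ t ∈ G) ∧ ContDiffOn ℝ 1 γ (Icc 0 1)} :=
    ⟨⟨fun t => x + t • (y - x), by simp, by simp, fun t ht => hG_conv.add_smul_sub_mem hx hy ht,
      by fun_prop⟩⟩
  refine le_ciInf fun ⟨γ, hγ₀, hγ₁, hγG, hγ⟩ => ?_
  calc c * qhDist H x y ≤ c * qhLength H γ := by
        gcongr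
        exact qhDist_le_qhLength hγ₀ hγ₁ (fun t ht => hGH (hγG t ht)) hγ
    _ ≤ qhLength G γ := mul_qhLength_le_of_mul_bdist_le hc hγ
        (fun t ht => bdist_pos hG hG_ne (hγG t ht)) fun t ht => hle _ (hγG t ht)

end Quasihyperbolic

section L1Ball

local notation "ℝ²" => EuclideanSpace ℝ (Fin 2)

def l1Ball : Set ℝ² := {p | |p 0| + |p 1| < 1}

theorem isOpen_l1Ball : IsOpen l1Ball :=
  isOpen_lt (by fun_prop) continuous_const

theorem convex_l1Ball : Convex ℝ l1Ball := by
  refine convex_iff_forall_pos.2 fun p hp q hq a b ha hb hab => ?_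
  have hp : |p 0| + |p 1| < 1 := hp
  have hq : |q 0| + |q 1| < 1 := hq
  have habs (u v : ℝ) : |a * u + b * v| ≤ a * |u| + b * |v| := by
    simpa only [abs_mul, abs_of_pos ha, abs_of_pos hb] using abs_add_le (a * u) (b * v)
  show |a * p 0 + b * q 0| + |a * p 1 + b * q 1| < 1
  calc |a * p 0 + b * q 0| + |a * p 1 + b * q 1|
      ≤ a * (|p 0| + |p 1|) + b * (|q 0| + |q 1|) := by
        linarith [habs (p 0) (q 0), habs (p 1) (q 1)]
    _ < a * 1 + b * 1 := by gcongr
    _ = 1 := by rw [mul_one, mul_one, hab]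

theorem l1Ball_ne_univ : l1Ball ≠ univ :=
  (ne_univ_iff_exists_notMem _).2 ⟨!₂[1, 0], by simp [l1Ball]⟩

theorem norm_le_abs_add_abs (p : ℝ²) : ‖p‖ ≤ |p 0| + |p 1| := by
  rw [EuclideanSpace.norm_eq, Fin.sum_univ_two, Real.sqrt_le_left (by positivity)]
  simp only [Real.norm_eq_abs, sq_abs]
  nlinarith [abs_nonneg (p 0), abs_nonneg (p 1), sq_abs (p 0), sq_abs (p 1)]

theorem l1Ball_subset_ball : l1Ball ⊆ ball 0 1 := fun p hp =>
  mem_ball_zero_iff.2 ((norm_le_abs_add_abs p).trans_lt hp)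

/-- `SignType.sign` would not do here: it vanishes at `0`. -/
noncomputable def signOne (a : ℝ) : ℝ := if 0 ≤ a then 1 else -1

theorem sq_signOne (a : ℝ) : signOne a ^ 2 = 1 := by
  unfold signOne; split_ifs <;> norm_num

theorem abs_add_mul_signOne (a : ℝ) {c : ℝ} (hc : 0 ≤ c) : |a + c * signOne a| = |a| + c := by
  unfold signOne
  split_ifs with ha
  · rw [mul_one, abs_of_nonneg ha, abs_of_nonneg (by positivity)]
  · rw [not_le] at ha
    rw [abs_of_neg ha, abs_of_neg (by linarith)]
    ring

theorem sqrt_two_mul_bdist_l1Ball_le {z : ℝ²} (hz : z ∈ l1Ball) :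
    √2 * bdist l1Ball z ≤ 1 - (|z 0| + |z 1|) := by
  have hsum : |z 0| + |z 1| < 1 := hz
  set c := (1 - (|z 0| + |z 1|)) / 2 with hc_def
  have hc : 0 ≤ c := by linarith
  set w : ℝ² := !₂[z 0 + c * signOne (z 0), z 1 + c * signOne (z 1)]
  have hw : w ∉ l1Ball := by
    show ¬ |w 0| + |w 1| < 1
    simp only [w, Matrix.cons_val_zero, Matrix.cons_val_one, abs_add_mul_signOne _ hc, not_lt]
    linarith
  have hdist : dist z w = √2 * c := by
    rw [EuclideanSpace.dist_eq, Fin.sum_univ_two]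
    simp only [w, Matrix.cons_val_zero, Matrix.cons_val_one, Real.dist_eq, sq_abs]
    have : ∀ a, (a - (a + c * signOne a)) ^ 2 = c ^ 2 := fun a => by
      rw [sub_add_cancel_left, neg_sq, mul_pow, sq_signOne, mul_one]
    rw [this, this, ← two_mul, Real.sqrt_mul zero_le_two, Real.sqrt_sq hc]
  calc √2 * bdist l1Ball z ≤ √2 * dist z w := by
        gcongr
        exact bdist_le_dist_of_notMem isOpen_l1Ball hz hw
    _ = 1 - (|z 0| + |z 1|) := by
        rw [hdist, ← mul_assoc, Real.mul_self_sqrt zero_le_two]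
        ring

theorem sqrt_two_mul_bdist_l1Ball_le_bdist_ball {z : ℝ²} (hz : z ∈ l1Ball) :
    √2 * bdist l1Ball z ≤ bdist (ball 0 1) z :=
  calc √2 * bdist l1Ball z ≤ 1 - (|z 0| + |z 1|) := sqrt_two_mul_bdist_l1Ball_le hz
    _ ≤ 1 - ‖z‖ := by linarith [norm_le_abs_add_abs z]
    _ ≤ bdist (ball 0 1) z := by
        simpa using sub_dist_le_bdist_ball (l1Ball_subset_ball hz)

end L1Ball

theorem stmt_12 (z₁ z₂ : EuclideanSpace ℝ (Fin 2))
    (h₁ : z₁ ∈ {p : EuclideanSpace ℝ (Fin 2) | |p 0| + |p 1| < 1})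
    (h₂ : z₂ ∈ {p : EuclideanSpace ℝ (Fin 2) | |p 0| + |p 1| < 1}) :
    Real.sqrt 2 * qhDist (Metric.ball (0 : EuclideanSpace ℝ (Fin 2)) 1) z₁ z₂ ≤
      qhDist {p : EuclideanSpace ℝ (Fin 2) | |p 0| + |p 1| < 1} z₁ z₂ :=
  mul_qhDist_le_of_mul_bdist_le (Real.sqrt_pos.2 two_pos) isOpen_l1Ball l1Ball_ne_univ
    convex_l1Ball l1Ball_subset_ball (fun _ => sqrt_two_mul_bdist_l1Ball_le_bdist_ball) h₁ h₂
end

section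
/- Let G₂ ⊊ ℝⁿ be a domain and let G₁ ⊂ G₂ be a bounded subdomain (nonempty, open, connected, containing at least two points). Set c = 1 + 2·dist(G₁, ∂G₂)/diam(G₁). Then for all x, y ∈ G₁, j_{G₁}(x,y) ≥ c · j_{G₂}(x,y). -/
open Set Metric

/-- The distance between two sets: the infimum of distances between their points. -/
noncomputable def setDist {n : ℕ} (A B : Set (EuclideanSpace ℝ (Fin n))) : ℝ :=
  sInf (Set.image2 dist A B)

/-!
Write `m = min (δ_{G₁} x) (δ_{G₁} y)`, `t = |x - y|`, `d = dist (G₁, ∂G₂)`, `D = diam G₁`.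
A segment from a point of `G₁` to a boundary point of `G₂` leaves `G₁` through `∂G₁` and
then still has length `≥ d` to go, so `δ_{G₂} ≥ δ_{G₁} + d` on `G₁`; the balls of radius `m`
about `x` and `y` lie in `G₁`, so `2m + t ≤ D`. The claim thus reduces to
`(2(m + d) + t) log (1 + t/(m + d)) ≤ (2m + t) log (1 + t/m)`, i.e. to the function
`s ↦ (2s + t) log (1 + t/s)` being decreasing on `(0, ∞)`; its derivative is nonpositive
because `log w ≤ sinh (log w) = (w - w⁻¹)/2` for `w ≥ 1`.
-/

namespace Real

theorem log_le_half_sub_inv {w : ℝ} (hw : 1 ≤ w) : log w ≤ (w - w⁻¹) / 2 := by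
  rw [← sinh_log (by positivity)]
  exact self_le_sinh_iff.2 (log_nonneg hw)

theorem antitoneOn_two_mul_add_mul_log_one_add_div {t : ℝ} (ht : 0 ≤ t) :
    AntitoneOn (fun s => (2 * s + t) * log (1 + t / s)) (Ioi 0) := by
  have hderiv : ∀ s ∈ Ioi (0 : ℝ), HasDerivAt (fun s => (2 * s + t) * log (1 + t / s))
      (2 * log (1 + t / s) - t * (2 * s + t) / (s * (s + t))) s := by
    intro s (hs : 0 < s)
    have h1 : 0 < 1 + t / s := by positivity
    refine ((((hasDerivAt_id s).const_mul 2).add_const t).mul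
      ((((hasDerivAt_inv hs.ne').const_mul t).const_add 1).log h1.ne')).congr_deriv ?_
    simp only [id, ← div_eq_mul_inv]
    field_simp
    ring
  refine antitoneOn_of_hasDerivWithinAt_nonpos (convex_Ioi 0)
    (fun s hs => (hderiv s hs).continuousAt.continuousWithinAt)
    (fun s hs => (hderiv s (interior_subset hs)).hasDerivWithinAt) fun s hs => ?_
  have hs : 0 < s := by simpa using hs
  have hlog : log (1 + t / s) ≤ t * (2 * s + t) / (s * (s + t)) / 2 := by
    convert log_le_half_sub_inv (w := 1 + t / s) (by simp; positivity) using 1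
    field_simp
    ring
  linarith

theorem one_add_two_mul_div_mul_log_le {m t d M D : ℝ} (hm : 0 < m) (ht : 0 ≤ t) (hd : 0 ≤ d)
    (hM : m + d ≤ M) (hD : 2 * m + t ≤ D) :
    (1 + 2 * d / D) * log (1 + t / M) ≤ log (1 + t / m) := by
  have hmd : 0 < m + d := by linarith
  have hc : 1 + 2 * d / D ≤ (2 * (m + d) + t) / (2 * m + t) := by
    rw [show (2 * (m + d) + t) / (2 * m + t) = 1 + 2 * d / (2 * m + t) by field_simp; ring]
    gcongr
  have hanti := antitoneOn_two_mul_add_mul_log_one_add_div ht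
    (mem_Ioi.2 hm) (mem_Ioi.2 hmd) (le_add_of_nonneg_right hd)
  calc (1 + 2 * d / D) * log (1 + t / M)
      ≤ (2 * (m + d) + t) / (2 * m + t) * log (1 + t / (m + d)) := by
        have hM0 : 0 < M := hmd.trans_le hM
        gcongr ?_ * ?_
        · exact log_nonneg (le_add_of_nonneg_right (by positivity))
        · gcongr
    _ ≤ log (1 + t / m) := by
        rw [div_mul_eq_mul_div, div_le_iff₀ (by positivity)]
        linarith

end Real

theorem IsPreconnected.inter_frontier_nonempty {X : Type*} [TopologicalSpace X] {s t : Set X}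
    (hs : IsPreconnected s) (hst : (s ∩ t).Nonempty) (hst' : (s \ t).Nonempty) :
    (s ∩ frontier t).Nonempty := by
  rw [frontier_eq_closure_inter_closure]
  refine isPreconnected_closed_iff.1 hs _ _ isClosed_closure isClosed_closure
    (fun x _ => (em (x ∈ t)).imp (subset_closure ·) (subset_closure ·)) ?_ ?_
  · exact hst.mono (inter_subset_inter_right _ subset_closure)
  · exact hst'.mono (inter_subset_inter_right _ subset_closure)

section NormedSpace

variable {E : Type*} [NormedAddCommGroup E] [NormedSpace ℝ E]

theorem infDist_frontier_add_infDist_le_dist {G : Set E} {z w : E} (hz : z ∈ G) (hw : w ∉ G) :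
    infDist z (frontier G) + infDist w G ≤ dist z w := by
  obtain ⟨u, hu_seg, hu⟩ := (convex_segment z w).isPreconnected.inter_frontier_nonempty
    ⟨z, left_mem_segment ℝ z w, hz⟩ ⟨w, right_mem_segment ℝ z w, hw⟩
  calc infDist z (frontier G) + infDist w G ≤ dist z u + dist u w := by
        gcongr
        · exact infDist_le_dist_of_mem hu
        · rw [← infDist_closure, dist_comm]
          exact infDist_le_dist_of_mem hu.1
    _ = dist z w := dist_add_dist_of_mem_segment hu_seg

theorem ball_infDist_frontier_subset {G : Set E} {z : E} (hz : z ∈ G) :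
    ball z (infDist z (frontier G)) ⊆ G := by
  intro p hp
  by_contra hpG
  have := infDist_frontier_add_infDist_le_dist hz hpG
  rw [mem_ball, dist_comm] at hp
  linarith [infDist_nonneg (x := p) (s := G)]

theorem dist_add_add_le_diam {G : Set E} (hG : Bornology.IsBounded G) {x y : E} {r r' : ℝ}
    (hr : 0 < r) (hr' : 0 < r') (hx : ball x r ⊆ G) (hy : ball y r' ⊆ G) (hxy : x ≠ y) :
    dist x y + r + r' ≤ diam G := by
  have hxy' : 0 < dist x y := dist_pos.2 hxy
  set v : E := (dist x y)⁻¹ • (x - y)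
  have hv : ‖v‖ = 1 := by
    rw [norm_smul, norm_inv, Real.norm_of_nonneg hxy'.le, ← dist_eq_norm,
      inv_mul_cancel₀ hxy'.ne']
  have hx' : x + r • v ∈ closure G := by
    refine closure_mono hx ?_
    rw [closure_ball x hr.ne', mem_closedBall, dist_eq_norm]
    simp [norm_smul, hv, abs_of_pos hr]
  have hy' : y - r' • v ∈ closure G := by
    refine closure_mono hy ?_
    rw [closure_ball y hr'.ne', mem_closedBall, dist_eq_norm]
    simp [norm_smul, hv, abs_of_pos hr']
  calc dist x y + r + r' = dist (x + r • v) (y - r' • v) := by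
        have : x + r • v - (y - r' • v) = (dist x y + r + r') • v := by
          simp only [v, smul_smul, add_smul, add_mul, mul_inv_cancel₀ hxy'.ne', one_smul]
          abel
        rw [dist_eq_norm (x + r • v), this, norm_smul, hv, mul_one,
          Real.norm_of_nonneg (by positivity)]
    _ ≤ diam (closure G) := dist_le_diam_of_mem hG.closure hx' hy'
    _ = diam G := diam_closure G

end NormedSpace

section Euclidean

variable {n : ℕ}

theorem setDist_nonneg (A B : Set (EuclideanSpace ℝ (Fin n))) : 0 ≤ setDist A B :=
  Real.sInf_nonneg (by rintro _ ⟨u, -, v, -, rfl⟩; exact dist_nonneg)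

theorem setDist_le_dist {A B : Set (EuclideanSpace ℝ (Fin n))} {u v : EuclideanSpace ℝ (Fin n)}
    (hu : u ∈ A) (hv : v ∈ B) : setDist A B ≤ dist u v :=
  csInf_le ⟨0, by rintro _ ⟨u, -, v, -, rfl⟩; exact dist_nonneg⟩ (mem_image2_of_mem hu hv)

theorem bdist_pos_s15 {G : Set (EuclideanSpace ℝ (Fin n))} (hG : IsOpen G)
    (hF : (frontier G).Nonempty) {x : EuclideanSpace ℝ (Fin n)} (hx : x ∈ G) : 0 < bdist G x :=
  (isClosed_frontier.notMem_iff_infDist_pos hF).1 fun h => (hG.frontier_eq ▸ h).2 hx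

theorem bdist_add_setDist_le {G₁ G₂ : Set (EuclideanSpace ℝ (Fin n))} (hsub : G₁ ⊆ G₂)
    (hG₁ : IsOpen G₁) (hF : (frontier G₂).Nonempty) {z : EuclideanSpace ℝ (Fin n)}
    (hz : z ∈ G₁) :
    bdist G₁ z + setDist G₁ (frontier G₂) ≤ bdist G₂ z := by
  refine (le_infDist hF).2 fun w hw => ?_
  have hwG : w ∉ G₁ := fun h => hw.2 (interior_maximal hsub hG₁ h)
  calc bdist G₁ z + setDist G₁ (frontier G₂) ≤ bdist G₁ z + infDist w G₁ := by
        gcongr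
        exact (le_infDist ⟨z, hz⟩).2 fun u hu => dist_comm u w ▸ setDist_le_dist hu hw
    _ ≤ dist z w := infDist_frontier_add_infDist_le_dist hz hwG

end Euclidean

theorem stmt_15_general (n : ℕ) (G₁ G₂ : Set (EuclideanSpace ℝ (Fin n)))
    (hG₂p : G₂ ≠ Set.univ)
    (hsub : G₁ ⊆ G₂) (hG₁o : IsOpen G₁)
    (hG₁b : Bornology.IsBounded G₁)
    (x y : EuclideanSpace ℝ (Fin n)) (hx : x ∈ G₁) (hy : y ∈ G₁) :
    (1 + 2 * setDist G₁ (frontier G₂) / Metric.diam G₁) * jDist G₂ x y ≤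
      jDist G₁ x y := by
  rcases eq_or_ne x y with rfl | hxy
  · simp [jDist]
  have : Nontrivial (EuclideanSpace ℝ (Fin n)) := ⟨⟨x, y, hxy⟩⟩
  have hF₁ : (frontier G₁).Nonempty :=
    nonempty_frontier_iff.2 ⟨⟨x, hx⟩, fun h => NormedSpace.unbounded_univ ℝ _ (h ▸ hG₁b)⟩
  have hF₂ : (frontier G₂).Nonempty := nonempty_frontier_iff.2 ⟨⟨x, hsub hx⟩, hG₂p⟩
  set m := min (bdist G₁ x) (bdist G₁ y)
  have hm : 0 < m := lt_min (bdist_pos_s15 hG₁o hF₁ hx) (bdist_pos_s15 hG₁o hF₁ hy)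
  have hM : m + setDist G₁ (frontier G₂) ≤ min (bdist G₂ x) (bdist G₂ y) := by
    rw [← min_add_add_right]
    exact min_le_min (bdist_add_setDist_le hsub hG₁o hF₂ hx)
      (bdist_add_setDist_le hsub hG₁o hF₂ hy)
  have hD : 2 * m + dist x y ≤ diam G₁ := by
    have := dist_add_add_le_diam hG₁b hm hm
      ((ball_subset_ball (min_le_left _ _)).trans (ball_infDist_frontier_subset hx))
      ((ball_subset_ball (min_le_right _ _)).trans (ball_infDist_frontier_subset hy)) hxy
    linarith
  exact Real.one_add_two_mul_div_mul_log_le hm dist_nonneg (setDist_nonneg _ _) hM hD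

theorem stmt_15 (n : ℕ) (G₁ G₂ : Set (EuclideanSpace ℝ (Fin n)))
    (hG₂o : IsOpen G₂) (hG₂c : IsConnected G₂) (hG₂p : G₂ ≠ Set.univ)
    (hsub : G₁ ⊆ G₂) (hG₁o : IsOpen G₁) (hG₁c : IsConnected G₁)
    (hG₁b : Bornology.IsBounded G₁) (hG₁nt : G₁.Nontrivial)
    (x y : EuclideanSpace ℝ (Fin n)) (hx : x ∈ G₁) (hy : y ∈ G₁) :
    (1 + 2 * setDist G₁ (frontier G₂) / Metric.diam G₁) * jDist G₂ x y ≤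
      jDist G₁ x y :=
  stmt_15_general n G₁ G₂ hG₂p hsub hG₁o hG₁b x y hx hy
end
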